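/- Let Ω ⊂ 𝕆² be open and let f: Ω → ℝ ∪ {−∞} be octonionic plurisubharmonic (upper semicontinuous with subharmonic restrictions to all affine octonionic lines). Then f is subharmonic on Ω ⊂ ℝ¹⁶: for every closed ball contained in Ω centered at x₀, f(x₀) is at most the average of f over the boundary sphere. -/

import Mathlib

/-!
Fix a continuous majorant `φ` of `v ↦ f (x₀ + r • v)` on `S¹⁵`. For `ξ ∈ S¹⁵`, the map
`u ↦ x₀ + r • ξu` runs over the sphere of radius `r` in the octonionic line through `x₀` with
direction `ξ`, so the sub-mean-value property on that line gives `f x₀ ≤ ∫ φ (ξu) dν(u)` for a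
rotation-invariant probability `ν` on `S⁷`. Since `|ξu| = |ξ| |u|`, right multiplication by a
unit octonion is an isometry of `𝕆²`, hence preserves `μ`; integrating over `ξ` and swapping the
integrals yields `f x₀ ≤ ∫ φ dμ`, and the infimum over `φ` is the claim.
-/

noncomputable section

def Oct : Type := Quaternion ℝ × Quaternion ℝ

namespace Oct

def fst (p : Oct) : Quaternion ℝ := Prod.fst p
def snd (p : Oct) : Quaternion ℝ := Prod.snd p

instance : NormedAddCommGroup Oct :=
  inferInstanceAs (NormedAddCommGroup (Quaternion ℝ × Quaternion ℝ))
instance : NormedSpace ℝ Oct :=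
  inferInstanceAs (NormedSpace ℝ (Quaternion ℝ × Quaternion ℝ))
instance : MeasurableSpace Oct := borel Oct

instance : One Oct := ⟨((1 : Quaternion ℝ), (0 : Quaternion ℝ))⟩

/-- Cayley–Dickson multiplication on 𝕆 = ℍ × ℍ. -/
instance : Mul Oct := ⟨fun p q =>
  (fst p * fst q - star (snd q) * snd p, snd q * fst p + snd p * star (fst q))⟩

/-- Octonionic conjugation. -/
def conj (p : Oct) : Oct := (star (fst p), -(snd p))

/-- Real part of an octonion. -/
def re (p : Oct) : ℝ := (fst p).re

/-- |p|² = Re(p p̄). -/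
def normSq (p : Oct) : ℝ := re (p * conj p)

/-- Embedding of the reals into the octonions. -/
def ofReal (r : ℝ) : Oct := ((r : Quaternion ℝ), (0 : Quaternion ℝ))

end Oct

open MeasureTheory

/-- The unit sphere S⁷ in the octonions. -/
abbrev Sphere7 : Type := {v : Oct // Oct.normSq v = 1}

/-- The squared Euclidean norm on 𝕆² ≅ ℝ¹⁶. -/
def normSq2 (w : Oct × Oct) : ℝ := Oct.normSq w.1 + Oct.normSq w.2

/-- The unit sphere S¹⁵ in 𝕆² ≅ ℝ¹⁶. -/
abbrev Sphere15 : Type := {v : Oct × Oct // normSq2 v = 1}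

/-- A rotation-invariant probability measure on S⁷. -/
def InvProb7 (μ : Measure Sphere7) : Prop :=
  IsProbabilityMeasure μ ∧
  ∀ e : Oct ≃ₗ[ℝ] Oct, ∀ he : (∀ w, Oct.normSq (e w) = Oct.normSq w),
    μ.map (fun v : Sphere7 => (⟨e ↑v, (he ↑v).trans v.2⟩ : Sphere7)) = μ

/-- A rotation-invariant probability measure on S¹⁵. -/
def InvProb15 (μ : Measure Sphere15) : Prop :=
  IsProbabilityMeasure μ ∧
  ∀ e : (Oct × Oct) ≃ₗ[ℝ] (Oct × Oct), ∀ he : (∀ w, normSq2 (e w) = normSq2 w),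
    μ.map (fun v : Sphere15 => (⟨e ↑v, (he ↑v).trans v.2⟩ : Sphere15)) = μ

/-- The average of an ℝ ∪ {−∞}-valued (upper semicontinuous) function with respect to a
measure, defined as the infimum of the integrals of its continuous real-valued majorants. -/
def erealAvg (X : Type) [TopologicalSpace X] [MeasurableSpace X]
    (μ : Measure X) (g : X → EReal) : EReal :=
  ⨅ φ : {φ : C(X, ℝ) // ∀ v, g v ≤ ((φ v : ℝ) : EReal)},
    ((∫ v, (φ : C(X, ℝ)) v ∂μ : ℝ) : EReal)

/-- The sub-mean-value property for an ℝ ∪ {−∞}-valued function of one octonionic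
variable on a domain D: whenever the closed ball of radius r around x₀ lies in D,
g(x₀) is at most the average of g over the sphere of radius r around x₀. -/
def SubMeanValueOn (g : Oct → EReal) (D : Set Oct) : Prop :=
  ∀ (x₀ : Oct) (r : ℝ), 0 < r →
    (∀ x : Oct, Oct.normSq (x - x₀) ≤ r ^ 2 → x ∈ D) →
    ∀ μ : Measure Sphere7, InvProb7 μ →
      g x₀ ≤ erealAvg Sphere7 μ (fun v => g (x₀ + r • (v : Oct)))

namespace Oct

instance : FiniteDimensional ℝ Oct :=
  inferInstanceAs (FiniteDimensional ℝ (Quaternion ℝ × Quaternion ℝ))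

instance : BorelSpace Oct := ⟨rfl⟩

lemma ext {p q : Oct} (h₁ : fst p = fst q) (h₂ : snd p = snd q) : p = q :=
  Prod.ext h₁ h₂

lemma fst_mul (p q : Oct) : fst (p * q) = fst p * fst q - star (snd q) * snd p := rfl
lemma snd_mul (p q : Oct) : snd (p * q) = snd q * fst p + snd p * star (fst q) := rfl
lemma fst_add (p q : Oct) : fst (p + q) = fst p + fst q := rfl
lemma snd_add (p q : Oct) : snd (p + q) = snd p + snd q := rfl
lemma fst_smul (r : ℝ) (p : Oct) : fst (r • p) = r • fst p := rfl
lemma snd_smul (r : ℝ) (p : Oct) : snd (r • p) = r • snd p := rfl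

lemma normSq_eq_add (p : Oct) :
    normSq p = Quaternion.normSq (fst p) + Quaternion.normSq (snd p) := by
  rw [normSq, re, fst_mul]
  simp [conj, fst, snd, Quaternion.normSq_def', Quaternion.re_mul, pow_two]

lemma normSq_mul (p q : Oct) : normSq (p * q) = normSq p * normSq q := by
  simp only [normSq_eq_add, fst_mul, snd_mul, Quaternion.normSq_def', Quaternion.re_mul,
    Quaternion.imI_mul, Quaternion.imJ_mul, Quaternion.imK_mul, Quaternion.re_sub,
    Quaternion.imI_sub, Quaternion.imJ_sub, Quaternion.imK_sub, Quaternion.re_add,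
    Quaternion.imI_add, Quaternion.imJ_add, Quaternion.imK_add, Quaternion.re_star,
    Quaternion.imI_star, Quaternion.imJ_star, Quaternion.imK_star]
  ring

lemma add_mul (p p' q : Oct) : (p + p') * q = p * q + p' * q := by
  apply ext <;> simp only [fst_mul, snd_mul, fst_add, snd_add] <;> noncomm_ring

lemma smul_mul (r : ℝ) (p q : Oct) : (r • p) * q = r • (p * q) := by
  apply ext <;> simp only [fst_mul, snd_mul, fst_smul, snd_smul, smul_sub, smul_add,
    smul_mul_assoc, mul_smul_comm]

lemma mul_smul (r : ℝ) (p q : Oct) : p * (r • q) = r • (p * q) := by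
  apply ext <;> simp only [fst_mul, snd_mul, fst_smul, snd_smul, Quaternion.star_smul,
    smul_sub, smul_add, smul_mul_assoc, mul_smul_comm]

lemma mul_zero (p : Oct) : p * 0 = 0 := by
  simpa using mul_smul 0 p 0

lemma continuous_mul : Continuous fun p : Oct × Oct => p.1 * p.2 := by
  have h₁ : Continuous fun p : Oct × Oct => fst p.1 := continuous_fst.comp continuous_fst
  have h₂ : Continuous fun p : Oct × Oct => snd p.1 := continuous_snd.comp continuous_fst
  have h₃ : Continuous fun p : Oct × Oct => fst p.2 := continuous_fst.comp continuous_snd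
  have h₄ : Continuous fun p : Oct × Oct => snd p.2 := continuous_snd.comp continuous_snd
  exact ((h₁.mul h₃).sub (h₄.star.mul h₂)).prodMk ((h₄.mul h₁).add (h₂.mul h₃.star))

end Oct

/-- `Oct` carries the sup norm of `ℍ × ℍ`; `Sphere7` is the unit sphere of this Euclidean
model, on which `Measure.toSphere` gives the rotation-invariant surface measure. -/
abbrev EuclideanOct : Type := WithLp 2 (Quaternion ℝ × Quaternion ℝ)

namespace EuclideanOct

instance : MeasurableSpace EuclideanOct := borel _
instance : BorelSpace EuclideanOct := ⟨rfl⟩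

def toOct : EuclideanOct ≃L[ℝ] Oct :=
  WithLp.prodContinuousLinearEquiv 2 ℝ (Quaternion ℝ) (Quaternion ℝ)

lemma normSq_toOct (x : EuclideanOct) : Oct.normSq (toOct x) = ‖x‖ ^ 2 := by
  rw [WithLp.prod_norm_sq_eq_of_L2, Oct.normSq_eq_add]
  simp [Quaternion.normSq_eq_norm_mul_self, pow_two]
  rfl

end EuclideanOct

open EuclideanOct

lemma Oct.normSq_eq_norm_sq (p : Oct) : Oct.normSq p = ‖toOct.symm p‖ ^ 2 := by
  rw [← normSq_toOct, ContinuousLinearEquiv.apply_symm_apply]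

lemma Oct.normSq_nonneg (p : Oct) : 0 ≤ Oct.normSq p := by
  rw [Oct.normSq_eq_norm_sq]
  positivity

lemma Oct.normSq_eq_zero {p : Oct} : Oct.normSq p = 0 ↔ p = 0 := by
  simp [Oct.normSq_eq_norm_sq]

lemma Oct.continuous_normSq : Continuous Oct.normSq := by
  simp_rw [funext Oct.normSq_eq_norm_sq]
  fun_prop

lemma Oct.isCompact_normSq_le_one : IsCompact {p : Oct | Oct.normSq p ≤ 1} := by
  have h : {p : Oct | Oct.normSq p ≤ 1} = toOct.symm ⁻¹' Metric.closedBall 0 1 := by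
    ext p
    simp [Oct.normSq_eq_norm_sq]
  rw [h]
  exact toOct.symm.toHomeomorph.isCompact_preimage.2 (isCompact_closedBall 0 1)

lemma normSq2_eq_zero {w : Oct × Oct} : normSq2 w = 0 ↔ w = 0 := by
  rw [normSq2, add_eq_zero_iff_of_nonneg (Oct.normSq_nonneg _) (Oct.normSq_nonneg _),
    Oct.normSq_eq_zero, Oct.normSq_eq_zero, Prod.ext_iff]
  rfl

lemma normSq2_mul_right (ξ : Oct × Oct) (u : Oct) :
    normSq2 (ξ.1 * u, ξ.2 * u) = normSq2 ξ * Oct.normSq u := by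
  simp only [normSq2, Oct.normSq_mul]
  ring

lemma continuous_normSq2 : Continuous normSq2 :=
  (Oct.continuous_normSq.comp continuous_fst).add (Oct.continuous_normSq.comp continuous_snd)

lemma Sphere15.coe_ne_zero (ξ : Sphere15) : (ξ : Oct × Oct) ≠ 0 := fun h =>
  one_ne_zero (ξ.2.symm.trans (normSq2_eq_zero.2 h))

instance : CompactSpace Sphere7 :=
  isCompact_iff_compactSpace.mp <| Oct.isCompact_normSq_le_one.of_isClosed_subset
    (isClosed_eq Oct.continuous_normSq continuous_const) fun _ hp => hp.le

instance : CompactSpace Sphere15 := by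
  refine isCompact_iff_compactSpace.mp <|
    (Oct.isCompact_normSq_le_one.prod Oct.isCompact_normSq_le_one).of_isClosed_subset
      (isClosed_eq continuous_normSq2 continuous_const) fun w hw => ?_
  have h : Oct.normSq w.1 + Oct.normSq w.2 = 1 := hw
  exact ⟨show Oct.normSq w.1 ≤ 1 by linarith [Oct.normSq_nonneg w.2],
    show Oct.normSq w.2 ≤ 1 by linarith [Oct.normSq_nonneg w.1]⟩

section
open Metric Set Pointwise

variable {E F : Type*} [NormedAddCommGroup E] [NormedSpace ℝ E] [NormedAddCommGroup F]
  [NormedSpace ℝ F]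

lemma LinearIsometryEquiv.preimage_set_smul (g : E ≃ₗᵢ[ℝ] F) (T : Set ℝ) (A : Set F) :
    T • (g ⁻¹' A) = g ⁻¹' (T • A) := by
  ext x
  simp only [mem_smul, mem_preimage]
  constructor
  · rintro ⟨t, ht, y, hy, rfl⟩
    exact ⟨t, ht, g y, hy, (g.map_smul t y).symm⟩
  · rintro ⟨t, ht, z, hz, hzx⟩
    refine ⟨t, ht, g.symm z, by simpa using hz, g.injective ?_⟩
    rw [map_smul, g.apply_symm_apply, hzx]

theorem MeasureTheory.Measure.toSphere_map_linearIsometryEquiv [MeasurableSpace E]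
    [BorelSpace E] (μ : Measure E) (g : E ≃ₗᵢ[ℝ] E) (hg : MeasurePreserving g μ μ) :
    μ.toSphere.map (fun x : sphere (0 : E) 1 => (⟨g x, by simp⟩ : sphere (0 : E) 1))
      = μ.toSphere := by
  set G := fun x : sphere (0 : E) 1 => (⟨g x, by simp⟩ : sphere (0 : E) 1)
  have hG : Measurable G :=
    ((g.continuous.comp continuous_subtype_val).subtype_mk _).measurable
  have hcoe : ∀ s, ((↑) '' (G ⁻¹' s) : Set E) = g ⁻¹' ((↑) '' s) := by
    intro s
    ext x
    constructor
    · rintro ⟨y, hy, rfl⟩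
      exact ⟨G y, hy, rfl⟩
    · rintro ⟨z, hz, hzx⟩
      have hx : x ∈ sphere (0 : E) 1 := by simpa [hzx] using z.2
      exact ⟨⟨x, hx⟩, by rwa [mem_preimage, show G ⟨x, hx⟩ = z from Subtype.ext hzx.symm], rfl⟩
  ext s hs
  rw [Measure.map_apply hG hs, toSphere_apply' μ (hG hs), toSphere_apply' μ hs, hcoe,
    g.preimage_set_smul, hg.measure_preimage_emb g.toHomeomorph.measurableEmbedding]

end

namespace EuclideanOct
open Metric

def sphereHomeomorph : sphere (0 : EuclideanOct) 1 ≃ₜ Sphere7 :=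
  toOct.toHomeomorph.subtype fun x => by
    rw [mem_sphere_zero_iff_norm, ContinuousLinearEquiv.coe_toHomeomorph, normSq_toOct,
      pow_eq_one_iff_of_nonneg (norm_nonneg x) two_ne_zero]

def isometryOfNormSq (e : Oct ≃ₗ[ℝ] Oct) (he : ∀ w, Oct.normSq (e w) = Oct.normSq w) :
    EuclideanOct ≃ₗᵢ[ℝ] EuclideanOct :=
  { toOct.toLinearEquiv.trans (e.trans toOct.symm.toLinearEquiv) with
    norm_map' x := by
      refine (sq_eq_sq₀ (norm_nonneg _) (norm_nonneg _)).1 ?_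
      show ‖toOct.symm (e (toOct x))‖ ^ 2 = ‖x‖ ^ 2
      rw [← Oct.normSq_eq_norm_sq, he, normSq_toOct] }

end EuclideanOct

open Metric in
theorem exists_invProb7 : ∃ ν : Measure Sphere7, InvProb7 ν := by
  set σ := (volume : Measure EuclideanOct).toSphere
  have : NeZero σ := ⟨Measure.toSphere_ne_zero _⟩
  refine ⟨((σ Set.univ)⁻¹ • σ).map sphereHomeomorph,
    Measure.isProbabilityMeasure_map sphereHomeomorph.measurable.aemeasurable, fun e he => ?_⟩
  set g := isometryOfNormSq e he
  have he_meas : Measurable fun v : Sphere7 => (⟨e v, (he v).trans v.2⟩ : Sphere7) :=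
    ((e.toContinuousLinearEquiv.continuous.comp continuous_subtype_val).subtype_mk _).measurable
  have hg_meas : Measurable fun x : sphere (0 : EuclideanOct) 1 =>
      (⟨g x, by simp⟩ : sphere (0 : EuclideanOct) 1) :=
    ((g.continuous.comp continuous_subtype_val).subtype_mk _).measurable
  have hcomm : (fun v : Sphere7 => (⟨e v, (he v).trans v.2⟩ : Sphere7)) ∘ sphereHomeomorph
      = sphereHomeomorph ∘ fun x : sphere (0 : EuclideanOct) 1 =>
        (⟨g x, by simp⟩ : sphere (0 : EuclideanOct) 1) :=
    funext fun _ => Subtype.ext rfl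
  rw [Measure.map_map he_meas sphereHomeomorph.measurable, hcomm,
    ← Measure.map_map sphereHomeomorph.measurable hg_meas, Measure.map_smul,
    Measure.toSphere_map_linearIsometryEquiv volume g g.measurePreserving]

def Oct.mulRightLinear (u : Oct) : (Oct × Oct) →ₗ[ℝ] Oct × Oct where
  toFun ξ := (ξ.1 * u, ξ.2 * u)
  map_add' ξ η := by simp only [Prod.fst_add, Prod.snd_add, Oct.add_mul, Prod.mk_add_mk]
  map_smul' r ξ := by
    simp only [Prod.smul_fst, Prod.smul_snd, Oct.smul_mul, RingHom.id_apply, Prod.smul_mk]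

lemma Sphere7.normSq2_mulRightLinear (u : Sphere7) (w : Oct × Oct) :
    normSq2 (Oct.mulRightLinear u w) = normSq2 w := by
  rw [Oct.mulRightLinear, LinearMap.coe_mk, AddHom.coe_mk, normSq2_mul_right, u.2, mul_one]

def Sphere7.mulRight (u : Sphere7) : (Oct × Oct) ≃ₗ[ℝ] Oct × Oct :=
  LinearEquiv.ofInjectiveEndo (Oct.mulRightLinear u) fun ξ η h => by
    rw [← sub_eq_zero, ← normSq2_eq_zero, ← u.normSq2_mulRightLinear, map_sub, h, sub_self,
      normSq2_eq_zero]

def Sphere15.mulRight (ξ : Sphere15) (u : Sphere7) : Sphere15 :=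
  ⟨u.mulRight ξ, (u.normSq2_mulRightLinear ξ).trans ξ.2⟩

lemma Sphere15.coe_mulRight (ξ : Sphere15) (u : Sphere7) :
    (ξ.mulRight u : Oct × Oct) = ((ξ : Oct × Oct).1 * u, (ξ : Oct × Oct).2 * u) :=
  rfl

lemma Sphere15.continuous_mulRight :
    Continuous fun p : Sphere15 × Sphere7 => p.1.mulRight p.2 := by
  apply continuous_induced_rng.2
  change Continuous fun p : Sphere15 × Sphere7 =>
    ((p.1 : Oct × Oct).1 * (p.2 : Oct), (p.1 : Oct × Oct).2 * (p.2 : Oct))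
  have hξ : Continuous fun p : Sphere15 × Sphere7 => (p.1 : Oct × Oct) := by fun_prop
  have hu : Continuous fun p : Sphere15 × Sphere7 => (p.2 : Oct) := by fun_prop
  exact (Oct.continuous_mul.comp (hξ.fst.prodMk hu)).prodMk
    (Oct.continuous_mul.comp (hξ.snd.prodMk hu))

section
variable {μ : Measure Sphere15}

lemma Sphere15.integrable_uncurry_mulRight [IsFiniteMeasure μ] (ν : Measure Sphere7)
    [IsFiniteMeasure ν] (φ : C(Sphere15, ℝ)) :
    Integrable (Function.uncurry fun (ξ : Sphere15) (u : Sphere7) => φ (ξ.mulRight u))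
      (μ.prod ν) :=
  (φ.continuous.comp Sphere15.continuous_mulRight).integrable_of_hasCompactSupport
    (.of_compactSpace _)

lemma InvProb15.integral_comp_mulRight (hμ : InvProb15 μ) (φ : C(Sphere15, ℝ)) (u : Sphere7) :
    ∫ ξ, φ (ξ.mulRight u) ∂μ = ∫ ξ, φ ξ ∂μ := by
  have hmeas : Measurable fun ξ : Sphere15 => ξ.mulRight u :=
    (Sphere15.continuous_mulRight.comp (.prodMk_left u)).measurable
  rw [← integral_map hmeas.aemeasurable φ.continuous.aestronglyMeasurable,
    show μ.map (fun ξ : Sphere15 => ξ.mulRight u) = μ from hμ.2 u.mulRight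
      u.normSq2_mulRightLinear]

lemma InvProb15.integral_integral_mulRight (hμ : InvProb15 μ) (ν : Measure Sphere7)
    [IsProbabilityMeasure ν] (φ : C(Sphere15, ℝ)) :
    ∫ ξ, ∫ u, φ (ξ.mulRight u) ∂ν ∂μ = ∫ ξ, φ ξ ∂μ := by
  have := hμ.1
  rw [integral_integral_swap (Sphere15.integrable_uncurry_mulRight ν φ)]
  simp [hμ.integral_comp_mulRight]

end

section
variable {X : Type} [TopologicalSpace X] [MeasurableSpace X] {μ : Measure X} {g : X → EReal}

lemma erealAvg_le_integral (φ : C(X, ℝ)) (hφ : ∀ v, g v ≤ φ v) :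
    erealAvg X μ g ≤ ((∫ v, φ v ∂μ : ℝ) : EReal) :=
  iInf_le_of_le ⟨φ, hφ⟩ le_rfl

lemma le_erealAvg {a : EReal} (h : ∀ φ : C(X, ℝ), (∀ v, g v ≤ φ v) → a ≤ ∫ v, φ v ∂μ) :
    a ≤ erealAvg X μ g :=
  le_iInf fun φ => h φ.1 φ.2

end

lemma le_coe_integral_of_forall_le {α : Type*} [MeasurableSpace α] {μ : Measure α}
    [IsProbabilityMeasure μ] {F : α → ℝ} (hF : Integrable F μ) {a : EReal}
    (h : ∀ x, a ≤ F x) : a ≤ ((∫ x, F x ∂μ : ℝ) : EReal) := by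
  induction a using EReal.rec with
  | bot => exact bot_le
  | coe t =>
    refine EReal.coe_le_coe_iff.2 ?_
    simpa using integral_mono (integrable_const t) hF fun x => EReal.coe_le_coe_iff.1 (h x)
  | top =>
    obtain ⟨x⟩ := nonempty_of_isProbabilityMeasure μ
    exact absurd (h x) (by simp)

/-- `u ↦ x₀ + r • ξu` runs over the sphere of radius `r` in the octonionic line through `x₀`
in direction `ξ`. -/
lemma SubMeanValueOn.le_integral_mulRight {Ω : Set (Oct × Oct)} {f : Oct × Oct → EReal}
    {x₀ : Oct × Oct} {ξ : Sphere15}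
    (hline : SubMeanValueOn (fun x : Oct => f (x₀ + (ξ.1.1 * x, ξ.1.2 * x)))
      {x : Oct | x₀ + (ξ.1.1 * x, ξ.1.2 * x) ∈ Ω})
    {r : ℝ} (hr : 0 < r) (hball : ∀ w, normSq2 (w - x₀) ≤ r ^ 2 → w ∈ Ω)
    {ν : Measure Sphere7} (hν : InvProb7 ν) (φ : C(Sphere15, ℝ))
    (hφ : ∀ v : Sphere15, f (x₀ + r • (v : Oct × Oct)) ≤ φ v) :
    f x₀ ≤ ((∫ u, φ (ξ.mulRight u) ∂ν : ℝ) : EReal) := by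
  have hD (x : Oct) (hx : Oct.normSq (x - 0) ≤ r ^ 2) :
      x₀ + (ξ.1.1 * x, ξ.1.2 * x) ∈ Ω := by
    refine hball _ ?_
    rwa [add_sub_cancel_left, normSq2_mul_right, ξ.2, one_mul, ← sub_zero x]
  have h := hline 0 r hr hD ν hν
  simp only [Oct.mul_zero, Prod.mk_zero_zero, add_zero, zero_add] at h
  have hcont : Continuous fun u : Sphere7 => φ (ξ.mulRight u) := by
    have := Sphere15.continuous_mulRight.comp (Continuous.prodMk_right (Y := Sphere7) ξ)
    exact φ.continuous.comp this
  refine h.trans (erealAvg_le_integral (μ := ν) ⟨_, hcont⟩ fun u => ?_)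
  have hu := hφ (ξ.mulRight u)
  rwa [Sphere15.coe_mulRight, Prod.smul_mk, ← Oct.mul_smul, ← Oct.mul_smul] at hu

theorem octonionic_psh_is_subharmonic_general (Ω : Set (Oct × Oct))
    (f : Oct × Oct → EReal)
    (hlines : ∀ z ξ : Oct × Oct, ξ ≠ 0 →
      SubMeanValueOn (fun x : Oct => f (z + (ξ.1 * x, ξ.2 * x)))
        {x : Oct | z + (ξ.1 * x, ξ.2 * x) ∈ Ω}) :
    ∀ (x₀ : Oct × Oct) (r : ℝ), 0 < r →
      (∀ w : Oct × Oct, normSq2 (w - x₀) ≤ r ^ 2 → w ∈ Ω) →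
      ∀ μ : Measure Sphere15, InvProb15 μ →
        f x₀ ≤ erealAvg Sphere15 μ (fun v => f (x₀ + r • (v : Oct × Oct))) := by
  intro x₀ r hr hball μ hμ
  have := hμ.1
  obtain ⟨ν, hν⟩ := exists_invProb7
  have := hν.1
  refine le_erealAvg fun φ hφ => ?_
  rw [← hμ.integral_integral_mulRight ν φ]
  exact le_coe_integral_of_forall_le (Sphere15.integrable_uncurry_mulRight ν φ).integral_prod_left
    fun ξ => (hlines x₀ ξ ξ.coe_ne_zero).le_integral_mulRight hr hball hν φ hφ

/-- Any octonionic plurisubharmonic function (upper semicontinuous, with subharmonic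
restrictions to all affine octonionic lines) on an open set Ω ⊂ 𝕆² is subharmonic on
Ω ⊂ ℝ¹⁶: for every closed ball contained in Ω centered at x₀, f(x₀) is at most the
average of f over the boundary sphere. -/
theorem octonionic_psh_is_subharmonic (Ω : Set (Oct × Oct)) (hΩ : IsOpen Ω)
    (f : Oct × Oct → EReal)
    (husc : UpperSemicontinuousOn f Ω)
    (hlines : ∀ z ξ : Oct × Oct, ξ ≠ 0 →
      SubMeanValueOn (fun x : Oct => f (z + (ξ.1 * x, ξ.2 * x)))
        {x : Oct | z + (ξ.1 * x, ξ.2 * x) ∈ Ω}) :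
    ∀ (x₀ : Oct × Oct) (r : ℝ), 0 < r →
      (∀ w : Oct × Oct, normSq2 (w - x₀) ≤ r ^ 2 → w ∈ Ω) →
      ∀ μ : Measure Sphere15, InvProb15 μ →
        f x₀ ≤ erealAvg Sphere15 μ (fun v => f (x₀ + r • (v : Oct × Oct))) :=
  octonionic_psh_is_subharmonic_general Ω f hlines
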